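/- Let Y_1, Y_2, ... be i.i.d. nonnegative random variables such that P[Y_1 ≥ t] ≤ C_1·exp(-t^α) for all t ≥ 0, for some constants C_1 > 0 and 0 < α < 1. Then E[Y_1] < ∞, and moreover there exist constants a > 0, 0 < β < 1, and C_2 > 0 such that P[∑_{i=1}^n Y_i ≥ a·n] ≤ C_2·exp(-n^β) for all n ≥ 1. -/

import Mathlib

/-!
Truncate at `t = √n`. The truncated variables `min Yᵢ t` lie in `[0, t]`, so the Chernoff bound
with parameter `1 / t`, together with `exp x ≤ 1 + (e - 1) x` on `[0, 1]`, shows that their sum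
exceeds `((e - 1) E[Y] + 1) n` with probability at most `exp (-n / t) = exp (-√n)`. If the sum of
the `Yᵢ` is that large but the truncated sum is not, some `Yᵢ ≥ √n`, which by the union bound has
probability at most `n C₁ exp (-n ^ (α / 2))`. Both terms are `O (exp (-n ^ (α / 4)))`.
Integrability of `Y₀` is the layer-cake formula, `exp (-t ^ α)` being integrable on `(0, ∞)`.
-/

open MeasureTheory ProbabilityTheory Finset Real Filter Asymptotics Set Topology

lemma Real.exp_le_one_add_mul_of_mem_Icc {x : ℝ} (hx : x ∈ Icc (0 : ℝ) 1) :
    exp x ≤ 1 + (exp 1 - 1) * x := by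
  have := convexOn_exp.2 (mem_univ 0) (mem_univ 1) (sub_nonneg.2 hx.2) hx.1 (sub_add_cancel 1 x)
  norm_num at this
  linarith

lemma Real.integrableOn_exp_neg_rpow {p : ℝ} (hp : 0 < p) :
    IntegrableOn (fun x : ℝ => exp (-x ^ p)) (Ioi 0) := by
  simpa using integrableOn_rpow_mul_exp_neg_rpow (s := 0) (by norm_num) hp

lemma integrable_of_measure_ge_le {Ω : Type*} [MeasurableSpace Ω] {μ : Measure Ω}
    {f : Ω → ℝ} {g : ℝ → ℝ} (hf : AEMeasurable f μ) (hf0 : 0 ≤ᵐ[μ] f)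
    (hg : IntegrableOn g (Ioi 0))
    (htail : ∀ t, 0 < t → μ {ω | t ≤ f ω} ≤ ENNReal.ofReal (g t)) :
    Integrable f μ := by
  refine ⟨hf.aestronglyMeasurable, ?_⟩
  rw [hasFiniteIntegral_iff_ofReal hf0, lintegral_eq_lintegral_meas_le μ hf0 hf]
  exact (setLIntegral_mono' measurableSet_Ioi htail).trans_lt hg.lintegral_lt_top

lemma setOf_le_sum_subset_union_setOf_le {Ω ι : Type*} (s : Finset ι) (Y : ι → Ω → ℝ)
    (a t : ℝ) :
    {ω | a ≤ ∑ i ∈ s, Y i ω} ⊆ {ω | a ≤ ∑ i ∈ s, min (Y i ω) t} ∪ ⋃ i ∈ s, {ω | t ≤ Y i ω} := by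
  intro ω hω
  by_cases hlarge : ∃ i ∈ s, t ≤ Y i ω
  · obtain ⟨i, hi, hti⟩ := hlarge
    exact Or.inr (mem_biUnion hi hti)
  · push Not at hlarge
    left
    simpa only [mem_ofPred_eq, sum_congr rfl fun i hi => min_eq_left (hlarge i hi).le] using hω

section Chernoff

variable {Ω : Type*} [MeasurableSpace Ω] {μ : Measure Ω} [IsProbabilityMeasure μ]

lemma mgf_le_exp_mul_integral {X : Ω → ℝ} {s : ℝ} (hX : Integrable X μ)
    (hsX : ∀ ω, s * X ω ∈ Icc (0 : ℝ) 1) : mgf X μ s ≤ exp ((exp 1 - 1) * s * μ[X]) :=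
  calc mgf X μ s ≤ ∫ ω, 1 + (exp 1 - 1) * (s * X ω) ∂μ :=
        integral_mono_of_nonneg (ae_of_all _ fun _ => (exp_pos _).le)
          ((integrable_const 1).add ((hX.const_mul s).const_mul _))
          (ae_of_all _ fun ω => exp_le_one_add_mul_of_mem_Icc (hsX ω))
    _ = 1 + (exp 1 - 1) * s * μ[X] := by
        rw [integral_add (integrable_const 1) ((hX.const_mul s).const_mul _), integral_const_mul,
          integral_const_mul]
        simp [mul_assoc]
    _ ≤ exp ((exp 1 - 1) * s * μ[X]) := by linarith [add_one_le_exp ((exp 1 - 1) * s * μ[X])]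

lemma measure_sum_ge_le_exp_of_mem_Icc {ι : Type*} {Z : ι → Ω → ℝ} {t m : ℝ} (ht : 0 < t)
    (hmeas : ∀ i, Measurable (Z i)) (hindep : iIndepFun Z μ) (hZ : ∀ i ω, Z i ω ∈ Icc 0 t)
    (hm : ∀ i, μ[Z i] ≤ m) (s : Finset ι) :
    μ.real {ω | ((exp 1 - 1) * m + 1) * #s ≤ ∑ i ∈ s, Z i ω} ≤ exp (-(#s / t)) := by
  have hscaled : ∀ i ω, t⁻¹ * Z i ω ∈ Icc (0 : ℝ) 1 := fun i ω =>
    ⟨by have := (hZ i ω).1; positivity, inv_mul_le_one_of_le₀ (hZ i ω).2 ht.le⟩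
  have hint : ∀ i, Integrable (Z i) μ := fun i =>
    .of_bound (hmeas i).aestronglyMeasurable t
      (ae_of_all _ fun ω => by rw [norm_of_nonneg (hZ i ω).1]; exact (hZ i ω).2)
  have hmgf : mgf (∑ i ∈ s, Z i) μ t⁻¹ ≤ exp ((exp 1 - 1) * t⁻¹ * m) ^ #s := by
    rw [hindep.mgf_sum hmeas, ← prod_const]
    refine prod_le_prod (fun i _ => mgf_nonneg) fun i _ => ?_
    refine (mgf_le_exp_mul_integral (hint i) (hscaled i)).trans (exp_le_exp.2 ?_)
    have : 0 ≤ (exp 1 - 1) * t⁻¹ := mul_nonneg (by linarith [add_one_le_exp 1]) (by positivity)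
    exact mul_le_mul_of_nonneg_left (hm i) this
  have hint_exp : Integrable (fun ω => exp (t⁻¹ * (∑ i ∈ s, Z i) ω)) μ := by
    refine .of_bound (by fun_prop) (exp #s) (ae_of_all _ fun ω => ?_)
    rw [norm_of_nonneg (exp_pos _).le, exp_le_exp, Finset.sum_apply, mul_sum]
    simpa using sum_le_sum fun i (_ : i ∈ s) => (hscaled i ω).2
  calc μ.real {ω | ((exp 1 - 1) * m + 1) * #s ≤ ∑ i ∈ s, Z i ω}
      ≤ exp (-t⁻¹ * (((exp 1 - 1) * m + 1) * #s)) * mgf (∑ i ∈ s, Z i) μ t⁻¹ := by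
        simpa using measure_ge_le_exp_mul_mgf _ (inv_nonneg.2 ht.le) hint_exp
    _ ≤ exp (-t⁻¹ * (((exp 1 - 1) * m + 1) * #s)) * exp ((exp 1 - 1) * t⁻¹ * m) ^ #s := by
        gcongr
    _ = exp (-(#s / t)) := by
        rw [← exp_nat_mul, ← exp_add]
        ring_nf

lemma measure_sum_ge_le_exp_add_card_mul_tail {ι : Type*} {Y : ι → Ω → ℝ} {i₀ : ι}
    (hmeas : ∀ i, Measurable (Y i)) (hnonneg : ∀ i ω, 0 ≤ Y i ω) (hindep : iIndepFun Y μ)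
    (hident : ∀ i, IdentDistrib (Y i) (Y i₀) μ μ) (hint : Integrable (Y i₀) μ) {t : ℝ}
    (ht : 0 < t) (s : Finset ι) :
    μ {ω | ((exp 1 - 1) * μ[Y i₀] + 1) * #s ≤ ∑ i ∈ s, Y i ω}
      ≤ ENNReal.ofReal (exp (-(#s / t))) + #s * μ {ω | t ≤ Y i₀ ω} := by
  set Z : ι → Ω → ℝ := fun i ω => min (Y i ω) t
  have hZmeas : ∀ i, Measurable (Z i) := fun i => (hmeas i).min measurable_const
  have hZ : ∀ i ω, Z i ω ∈ Icc 0 t := fun i ω => ⟨le_min (hnonneg i ω) ht.le, min_le_right _ _⟩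
  have hZmean : ∀ i, μ[Z i] ≤ μ[Y i₀] := fun i => by
    rw [← (hident i).integral_eq]
    refine integral_mono (.of_bound (hZmeas i).aestronglyMeasurable t (ae_of_all _ fun ω => ?_))
      ((hident i).integrable_iff.2 hint) fun ω => min_le_left _ _
    rw [norm_of_nonneg (hZ i ω).1]
    exact (hZ i ω).2
  have htruncated := measure_sum_ge_le_exp_of_mem_Icc ht hZmeas
    (hindep.comp (fun _ x => min x t) fun _ => by fun_prop) hZ hZmean s
  have htail : ∀ i, μ {ω | t ≤ Y i ω} = μ {ω | t ≤ Y i₀ ω} := fun i =>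
    (hident i).measure_mem_eq measurableSet_Ici
  calc μ {ω | ((exp 1 - 1) * μ[Y i₀] + 1) * #s ≤ ∑ i ∈ s, Y i ω}
      ≤ μ {ω | ((exp 1 - 1) * μ[Y i₀] + 1) * #s ≤ ∑ i ∈ s, Z i ω}
          + μ (⋃ i ∈ s, {ω | t ≤ Y i ω}) :=
        (measure_mono (setOf_le_sum_subset_union_setOf_le s Y _ t)).trans (measure_union_le _ _)
    _ ≤ ENNReal.ofReal (exp (-(#s / t))) + ∑ i ∈ s, μ {ω | t ≤ Y i ω} := by
        gcongr
        · rw [← ofReal_measureReal]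
          exact ENNReal.ofReal_le_ofReal htruncated
        · exact measure_biUnion_finset_le _ _
    _ = ENNReal.ofReal (exp (-(#s / t))) + #s * μ {ω | t ≤ Y i₀ ω} := by
        simp only [htail, sum_const, nsmul_eq_mul]

end Chernoff

lemma isLittleO_mul_exp_neg_rpow {β γ : ℝ} (hγ : 0 < γ) (hβγ : β < γ) :
    (fun x : ℝ => x * exp (-x ^ γ)) =o[atTop] fun x => exp (-x ^ β) := by
  have hlim : Tendsto (fun x : ℝ => x * exp (-x ^ γ / 2)) atTop (𝓝 0) := by
    refine ((tendsto_rpow_mul_exp_neg_mul_atTop_nhds_zero γ⁻¹ (1 / 2) one_half_pos).comp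
      (tendsto_rpow_atTop hγ)).congr' ?_
    filter_upwards [eventually_ge_atTop 0] with x hx
    simp only [Function.comp_apply, ← rpow_mul hx, mul_inv_cancel₀ hγ.ne', rpow_one]
    ring_nf
  have hhalf : (fun x => exp (-x ^ γ / 2)) =O[atTop] fun x => exp (-x ^ β) := by
    refine IsBigO.of_norm_eventuallyLE ?_
    filter_upwards [(tendsto_rpow_atTop (sub_pos.2 hβγ)).eventually_ge_atTop 2,
      eventually_gt_atTop 0] with x hgap hx
    have hsplit : x ^ γ = x ^ (γ - β) * x ^ β := by rw [← rpow_add hx, sub_add_cancel]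
    rw [norm_of_nonneg (exp_pos _).le, exp_le_exp]
    nlinarith [rpow_pos_of_pos hx β]
  refine ((isLittleO_one_iff ℝ).2 hlim |>.mul_isBigO hhalf).congr (fun x => ?_) fun x => one_mul _
  rw [mul_assoc, ← exp_add]
  ring_nf

lemma isBigO_exp_neg_sqrt_add_mul_exp_neg_sqrt_rpow (C : ℝ) {α : ℝ} (hα0 : 0 < α)
    (hα2 : α ≤ 2) :
    (fun x : ℝ => exp (-√x) + x * (C * exp (-√x ^ α))) =O[atTop]
      fun x => exp (-x ^ (α / 4)) := by
  refine IsBigO.add (IsBigO.of_norm_eventuallyLE ?_) ?_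
  · filter_upwards [eventually_ge_atTop 1] with x hx
    rw [norm_of_nonneg (exp_pos _).le, exp_le_exp, neg_le_neg_iff, sqrt_eq_rpow]
    exact rpow_le_rpow_of_exponent_le hx (by linarith)
  · refine ((isLittleO_mul_exp_neg_rpow (β := α / 4) (γ := α / 2) (by positivity)
      (by linarith)).isBigO.const_mul_left C).congr' ?_ .rfl
    filter_upwards [eventually_ge_atTop 0] with x hx
    rw [sqrt_eq_rpow, ← rpow_mul hx]
    ring_nf

lemma exists_pos_exp_neg_sqrt_add_le (C : ℝ) {α : ℝ} (hα0 : 0 < α) (hα2 : α ≤ 2) :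
    ∃ C₂ > 0, ∀ n : ℕ,
      exp (-√n) + n * (C * exp (-√n ^ α)) ≤ C₂ * exp (-(n : ℝ) ^ (α / 4)) := by
  obtain ⟨C₂, hC₂, hbound⟩ := bound_of_isBigO_nat_atTop
    ((isBigO_exp_neg_sqrt_add_mul_exp_neg_sqrt_rpow C hα0 hα2).comp_tendsto
      tendsto_natCast_atTop_atTop)
  refine ⟨C₂, hC₂, fun n => ?_⟩
  have := @hbound n (exp_pos _).ne'
  rw [Function.comp_apply, Function.comp_apply, norm_of_nonneg (exp_pos _).le] at this
  exact (le_norm_self _).trans this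

/-- (Nagaev-type bound.) If `Y_1, Y_2, …` are i.i.d. nonnegative random
variables with stretched-exponential tails `P[Y_i ≥ t] ≤ C₁ exp(-t^α)`
(`C₁ > 0`, `0 < α < 1`), then `E[Y_1] < ∞` and there exist `a > 0`,
`0 < β < 1` and `C₂ > 0` such that `P[∑_{i=1}^n Y_i ≥ a·n] ≤ C₂ exp(-n^β)`
for all `n ≥ 1`. -/
theorem stmt_10 {Ω : Type*} [MeasurableSpace Ω] (μ : Measure Ω) [IsProbabilityMeasure μ]
    (Y : ℕ → Ω → ℝ) (C₁ α : ℝ) (hC₁ : 0 < C₁) (hα0 : 0 < α) (hα1 : α < 1)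
    (hmeas : ∀ i, Measurable (Y i))
    (hnonneg : ∀ i ω, 0 ≤ Y i ω)
    (hindep : iIndepFun Y μ)
    (hident : ∀ i, Measure.map (Y i) μ = Measure.map (Y 0) μ)
    (htail : ∀ t : ℝ, 0 ≤ t →
      μ {ω | t ≤ Y 0 ω} ≤ ENNReal.ofReal (C₁ * Real.exp (-(t ^ α)))) :
    Integrable (Y 0) μ ∧
      ∃ a : ℝ, 0 < a ∧ ∃ β : ℝ, 0 < β ∧ β < 1 ∧ ∃ C₂ : ℝ, 0 < C₂ ∧
        ∀ n : ℕ, 1 ≤ n →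
          μ {ω | a * n ≤ ∑ i ∈ range n, Y i ω}
            ≤ ENNReal.ofReal (C₂ * Real.exp (-((n : ℝ) ^ β))) := by
  have hint : Integrable (Y 0) μ :=
    integrable_of_measure_ge_le (hmeas 0).aemeasurable (ae_of_all _ (hnonneg 0))
      ((integrableOn_exp_neg_rpow hα0).const_mul C₁) fun t ht => htail t ht.le
  have hident' : ∀ i, IdentDistrib (Y i) (Y 0) μ μ := fun i =>
    ⟨(hmeas i).aemeasurable, (hmeas 0).aemeasurable, hident i⟩
  have hmean : 0 ≤ μ[Y 0] := integral_nonneg (hnonneg 0)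
  have he : 0 ≤ exp 1 - 1 := by linarith [add_one_le_exp 1]
  obtain ⟨C₂, hC₂, hbound⟩ := exists_pos_exp_neg_sqrt_add_le C₁ hα0 (by linarith)
  refine ⟨hint, (exp 1 - 1) * μ[Y 0] + 1, by positivity, α / 4, by positivity, by linarith,
    C₂, hC₂, fun n hn => ?_⟩
  have hsqrt : 0 < √(n : ℝ) := sqrt_pos.2 (by exact_mod_cast hn)
  calc μ {ω | ((exp 1 - 1) * μ[Y 0] + 1) * n ≤ ∑ i ∈ range n, Y i ω}
      ≤ ENNReal.ofReal (exp (-(n / √n))) + n * μ {ω | √n ≤ Y 0 ω} := by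
        simpa using measure_sum_ge_le_exp_add_card_mul_tail hmeas hnonneg hindep hident' hint
          hsqrt (range n)
    _ ≤ ENNReal.ofReal (exp (-√n)) + n * ENNReal.ofReal (C₁ * exp (-√n ^ α)) := by
        rw [div_sqrt]
        gcongr
        exact htail _ hsqrt.le
    _ = ENNReal.ofReal (exp (-√n) + n * (C₁ * exp (-√n ^ α))) := by
        rw [ENNReal.ofReal_add (exp_pos _).le (by positivity), ENNReal.ofReal_mul (Nat.cast_nonneg n),
          ENNReal.ofReal_natCast]
    _ ≤ ENNReal.ofReal (C₂ * exp (-(n : ℝ) ^ (α / 4))) := ENNReal.ofReal_le_ofReal (hbound n)
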